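/- Let α > 2, β ≥ 0, c > 0, N ∈ ℕ, and let w = (w_{jk})_{-N≤j,k≤N} be a complex (2N+1)×(2N+1) matrix whose columns w_k satisfy |⟨w_{j'}, w_{j''}⟩ - δ_{j'j''}| ≤ ε_{j'j''} with ε_{j'j''} = c e^{-β|j'-j''|}/(⟨j'⟩⟨j''⟩(N+1)²⟨j'-j''⟩^{α-1}). Then for all sufficiently large N there exists a unitary matrix U = (u_{jk}) ∈ U(2N+1) such that |u_{jk} - w_{jk}| ≤ σ_k |w_{jk}| + ∑_{-|k|≤l<|k|, l≠k} 4 ε_{lk} |w_{jl}|, where σ_k = 4 ∑_{|l|≤|k|} ε_{lk}. -/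

import Mathlib

/-!
Orthonormalise the columns `w_k` by Gram–Schmidt in the order `0, -1, 1, -2, 2, …`, so that the
columns treated before `w_k` are exactly the `w_l` with `-|k| ≤ l < |k|`, `l ≠ k`. By induction
along this order, the normalised output `u_l` satisfies `|⟨u_l, w_k⟩| ≤ 2 ε_{lk}` for every later
`k`, and `u_l - w_l` is bounded entrywise by `∑_{m ≤ l} 4 ε_{ml} |w_{jm}|`. The induction closes
because `ε` is almost idempotent: `ε_{am} ε_{mb} ≤ c (N+1)⁻² ε_{ab}` (triangle inequality in the
exponential, and `⟨a-b⟩ ≤ ⟨a-m⟩⟨m-b⟩`), so `∑_m ε_{am} ε_{mb} ≤ ε_{ab} / 16` once `N + 1 ≥ 32 c`,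
and every quadratic error term is absorbed by a linear one.
-/

open scoped ComplexConjugate

/-- ⟨k⟩ = |k| + 1 -/
noncomputable def br (k : ℤ) : ℝ := |(k : ℝ)| + 1

/-- ε_{jk} = c e^{-β|j-k|} / (⟨j⟩⟨k⟩(N+1)²⟨j-k⟩^{α-1}) -/
noncomputable def eps (c β α : ℝ) (N : ℕ) (j k : ℤ) : ℝ :=
  c * Real.exp (-β * |((j - k : ℤ) : ℝ)|) /
    (br j * br k * ((N : ℝ) + 1) ^ 2 * br (j - k) ^ (α - 1))

open Finset InnerProductSpace

theorem seven_eighths_le_of_abs_sq_sub_one_le {r δ : ℝ} (hr : 0 ≤ r) (hδ : δ ≤ 1 / 16)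
    (h : |r ^ 2 - 1| ≤ 2 * δ) : 7 / 8 ≤ r := by
  nlinarith [(abs_le.mp h).1]

theorem abs_inv_sub_one_le_of_abs_sq_sub_one_le {r δ : ℝ} (hr : 0 ≤ r) (hδ : δ ≤ 1 / 16)
    (h : |r ^ 2 - 1| ≤ 2 * δ) : |r⁻¹ - 1| ≤ 4 * δ := by
  have hr78 := seven_eighths_le_of_abs_sq_sub_one_le hr hδ h
  have hr0 : 0 < r := by linarith
  have hsq : |1 - r| ≤ |r ^ 2 - 1| := by
    rw [abs_sub_comm, show r ^ 2 - 1 = (r - 1) * (r + 1) by ring, abs_mul,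
      abs_of_pos (by linarith : 0 < r + 1)]
    nlinarith [abs_nonneg (r - 1)]
  rw [show r⁻¹ - 1 = (1 - r) / r by field_simp, abs_div, abs_of_pos hr0, div_le_iff₀ hr0]
  nlinarith [abs_nonneg (r ^ 2 - 1)]

section Perturbation

variable {𝕜 E ι : Type*} [RCLike 𝕜] [NormedAddCommGroup E] [InnerProductSpace 𝕜 E]

local notation "⟪" x ", " y "⟫" => inner 𝕜 x y

section AlmostOrthonormal

variable (𝕜) in
structure IsAlmostOrthonormal [Fintype ι] (ε : ι → ι → ℝ) (f : ι → E) : Prop where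
  symm : ∀ a b, ε a b = ε b a
  sum_mul_le : ∀ a b, ∑ m, ε a m * ε m b ≤ ε a b / 16
  norm_inner_self_sub_one_le : ∀ a, ‖⟪f a, f a⟫ - 1‖ ≤ ε a a
  norm_inner_le_of_ne : ∀ a b, a ≠ b → ‖⟪f a, f b⟫‖ ≤ ε a b

namespace IsAlmostOrthonormal

variable [Fintype ι] {ε : ι → ι → ℝ} {f : ι → E}

theorem nonneg (h : IsAlmostOrthonormal 𝕜 ε f) (a b : ι) : 0 ≤ ε a b := by
  rcases eq_or_ne a b with rfl | hab
  · exact (norm_nonneg _).trans (h.norm_inner_self_sub_one_le a)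
  · exact (norm_nonneg _).trans (h.norm_inner_le_of_ne a b hab)

theorem sum_subset_mul_le (h : IsAlmostOrthonormal 𝕜 ε f) (s : Finset ι) (a b : ι) :
    ∑ m ∈ s, ε a m * ε m b ≤ ε a b / 16 :=
  (sum_le_sum_of_subset_of_nonneg (subset_univ s) fun m _ _ =>
    mul_nonneg (h.nonneg a m) (h.nonneg m b)).trans (h.sum_mul_le a b)

theorem le_one_div_sixteen (h : IsAlmostOrthonormal 𝕜 ε f) (a : ι) : ε a a ≤ 1 / 16 := by
  have := h.sum_subset_mul_le {a} a a
  rw [sum_singleton] at this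
  nlinarith [h.nonneg a a]

theorem norm_sum_mul_le (h : IsAlmostOrthonormal 𝕜 ε f) (s : Finset ι) {a b : ι} (x y : ι → 𝕜)
    (hx : ∀ l ∈ s, ‖x l‖ ≤ 2 * ε l a) (hy : ∀ l ∈ s, ‖y l‖ ≤ 2 * ε l b) :
    ‖∑ l ∈ s, x l * y l‖ ≤ ε a b / 4 :=
  calc ‖∑ l ∈ s, x l * y l‖ ≤ ∑ l ∈ s, 4 * (ε a l * ε l b) := by
        refine (norm_sum_le _ _).trans (sum_le_sum fun l hl => ?_)
        rw [norm_mul, h.symm a l]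
        nlinarith [mul_le_mul (hx l hl) (hy l hl) (norm_nonneg _) (by linarith [h.nonneg l a])]
    _ ≤ 4 * (ε a b / 16) := by rw [← mul_sum]; gcongr; exact h.sum_subset_mul_le s a b
    _ = ε a b / 4 := by ring

end IsAlmostOrthonormal

end AlmostOrthonormal

section GramSchmidt

variable [LinearOrder ι] [LocallyFiniteOrderBot ι] [WellFoundedLT ι]

theorem starProjection_singleton_eq_inner_smul (v w : E) :
    (𝕜 ∙ v).starProjection w = ⟪(‖v‖ : 𝕜)⁻¹ • v, w⟫ • (‖v‖ : 𝕜)⁻¹ • v := by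
  rw [Submodule.starProjection_singleton, inner_smul_left, smul_smul]
  congr 1
  simp only [RCLike.conj_inv, RCLike.conj_ofReal, RCLike.ofReal_pow]
  ring

theorem gramSchmidt_eq_sub_sum_inner_smul (f : ι → E) (n : ι) :
    gramSchmidt 𝕜 f n =
      f n - ∑ i ∈ Iio n, ⟪gramSchmidtNormed 𝕜 f i, f n⟫ • gramSchmidtNormed 𝕜 f i := by
  simp only [gramSchmidt_def 𝕜 f n, starProjection_singleton_eq_inner_smul, gramSchmidtNormed]

theorem inner_gramSchmidt_left (f : ι → E) (n : ι) (x : E) :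
    ⟪gramSchmidt 𝕜 f n, x⟫ =
      ⟪f n, x⟫ - ∑ i ∈ Iio n,
        (starRingEnd 𝕜) ⟪gramSchmidtNormed 𝕜 f i, f n⟫ * ⟪gramSchmidtNormed 𝕜 f i, x⟫ := by
  rw [gramSchmidt_eq_sub_sum_inner_smul, inner_sub_left, sum_inner]
  simp only [inner_smul_left]

theorem inner_gramSchmidt_self (f : ι → E) (n : ι) :
    ⟪gramSchmidt 𝕜 f n, gramSchmidt 𝕜 f n⟫ = ⟪gramSchmidt 𝕜 f n, f n⟫ := by
  nth_rw 2 [gramSchmidt_eq_sub_sum_inner_smul f n]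
  rw [inner_sub_right, inner_sum, sub_eq_self]
  refine sum_eq_zero fun i hi => ?_
  rw [inner_smul_right, gramSchmidtNormed, inner_smul_right,
    gramSchmidt_orthogonal 𝕜 f (mem_Iio.mp hi).ne', mul_zero, mul_zero]

namespace IsAlmostOrthonormal

variable [Fintype ι] {ε : ι → ι → ℝ} {f : ι → E}

theorem abs_norm_gramSchmidt_sq_sub_one_le (h : IsAlmostOrthonormal 𝕜 ε f) {k : ι}
    (hcoef : ∀ l < k, ‖⟪gramSchmidtNormed 𝕜 f l, f k⟫‖ ≤ 2 * ε l k) :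
    |‖gramSchmidt 𝕜 f k‖ ^ 2 - 1| ≤ 2 * ε k k := by
  have hcoef' : ∀ l ∈ Iio k, ‖⟪gramSchmidtNormed 𝕜 f l, f k⟫‖ ≤ 2 * ε l k :=
    fun l hl => hcoef l (mem_Iio.mp hl)
  have hconj : ∀ l ∈ Iio k, ‖(starRingEnd 𝕜) ⟪gramSchmidtNormed 𝕜 f l, f k⟫‖ ≤ 2 * ε l k :=
    fun l hl => (RCLike.norm_conj _).trans_le (hcoef' l hl)
  have hsq : (((‖gramSchmidt 𝕜 f k‖ ^ 2 - 1 : ℝ)) : 𝕜) = (⟪f k, f k⟫ - 1) - ∑ l ∈ Iio k,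
      (starRingEnd 𝕜) ⟪gramSchmidtNormed 𝕜 f l, f k⟫ * ⟪gramSchmidtNormed 𝕜 f l, f k⟫ := by
    rw [RCLike.ofReal_sub, RCLike.ofReal_pow, ← inner_self_eq_norm_sq_to_K, inner_gramSchmidt_self,
      inner_gramSchmidt_left, RCLike.ofReal_one]
    ring
  calc |‖gramSchmidt 𝕜 f k‖ ^ 2 - 1| = ‖(((‖gramSchmidt 𝕜 f k‖ ^ 2 - 1 : ℝ)) : 𝕜)‖ :=
        (RCLike.norm_ofReal _).symm
    _ ≤ ε k k + ε k k / 4 := by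
        rw [hsq]
        exact (norm_sub_le _ _).trans
          (add_le_add (h.norm_inner_self_sub_one_le k) (h.norm_sum_mul_le _ _ _ hconj hcoef'))
    _ ≤ 2 * ε k k := by linarith [h.nonneg k k]

theorem seven_eighths_le_norm_gramSchmidt (h : IsAlmostOrthonormal 𝕜 ε f) {k : ι}
    (hcoef : ∀ l < k, ‖⟪gramSchmidtNormed 𝕜 f l, f k⟫‖ ≤ 2 * ε l k) :
    7 / 8 ≤ ‖gramSchmidt 𝕜 f k‖ :=
  seven_eighths_le_of_abs_sq_sub_one_le (norm_nonneg _) (h.le_one_div_sixteen k)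
    (h.abs_norm_gramSchmidt_sq_sub_one_le hcoef)

theorem inv_norm_gramSchmidt_le (h : IsAlmostOrthonormal 𝕜 ε f) {k : ι}
    (hcoef : ∀ l < k, ‖⟪gramSchmidtNormed 𝕜 f l, f k⟫‖ ≤ 2 * ε l k) :
    ‖gramSchmidt 𝕜 f k‖⁻¹ ≤ 8 / 7 :=
  (inv_anti₀ (by norm_num) (h.seven_eighths_le_norm_gramSchmidt hcoef)).trans_eq (by norm_num)

theorem abs_inv_norm_gramSchmidt_sub_one_le (h : IsAlmostOrthonormal 𝕜 ε f) {k : ι}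
    (hcoef : ∀ l < k, ‖⟪gramSchmidtNormed 𝕜 f l, f k⟫‖ ≤ 2 * ε l k) :
    |‖gramSchmidt 𝕜 f k‖⁻¹ - 1| ≤ 4 * ε k k :=
  abs_inv_sub_one_le_of_abs_sq_sub_one_le (norm_nonneg _) (h.le_one_div_sixteen k)
    (h.abs_norm_gramSchmidt_sq_sub_one_le hcoef)

theorem norm_inner_gramSchmidtNormed_le_of_forall_lt (h : IsAlmostOrthonormal 𝕜 ε f) {k : ι}
    (hprev : ∀ l < k, ∀ k', l < k' → ‖⟪gramSchmidtNormed 𝕜 f l, f k'⟫‖ ≤ 2 * ε l k')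
    {k' : ι} (hk : k < k') :
    ‖⟪gramSchmidtNormed 𝕜 f k, f k'⟫‖ ≤ 2 * ε k k' := by
  have hk₁ : ∀ l ∈ Iio k, ‖(starRingEnd 𝕜) ⟪gramSchmidtNormed 𝕜 f l, f k⟫‖ ≤ 2 * ε l k :=
    fun l hl => (RCLike.norm_conj _).trans_le (hprev l (mem_Iio.mp hl) k (mem_Iio.mp hl))
  have hk₂ : ∀ l ∈ Iio k, ‖⟪gramSchmidtNormed 𝕜 f l, f k'⟫‖ ≤ 2 * ε l k' :=
    fun l hl => hprev l (mem_Iio.mp hl) k' ((mem_Iio.mp hl).trans hk)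
  have hv : ‖⟪gramSchmidt 𝕜 f k, f k'⟫‖ ≤ ε k k' + ε k k' / 4 := by
    rw [inner_gramSchmidt_left]
    exact (norm_sub_le _ _).trans
      (add_le_add (h.norm_inner_le_of_ne k k' hk.ne) (h.norm_sum_mul_le _ _ _ hk₁ hk₂))
  rw [gramSchmidtNormed, inner_smul_left, norm_mul, RCLike.norm_conj, norm_inv,
    RCLike.norm_ofReal, abs_norm]
  calc ‖gramSchmidt 𝕜 f k‖⁻¹ * ‖⟪gramSchmidt 𝕜 f k, f k'⟫‖
      ≤ 8 / 7 * (ε k k' + ε k k' / 4) :=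
        mul_le_mul (h.inv_norm_gramSchmidt_le fun l hl => hprev l hl k hl) hv (norm_nonneg _)
          (by norm_num)
    _ ≤ 2 * ε k k' := by linarith [h.nonneg k k']

theorem norm_inner_gramSchmidtNormed_le (h : IsAlmostOrthonormal 𝕜 ε f) {k k' : ι}
    (hk : k < k') : ‖⟪gramSchmidtNormed 𝕜 f k, f k'⟫‖ ≤ 2 * ε k k' := by
  induction k using WellFoundedLT.induction generalizing k' with
  | _ k ih => exact h.norm_inner_gramSchmidtNormed_le_of_forall_lt (fun l hl _ => ih l hl) hk

theorem orthonormal_gramSchmidtNormed (h : IsAlmostOrthonormal 𝕜 ε f) :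
    Orthonormal 𝕜 (gramSchmidtNormed 𝕜 f) := by
  have hne : ∀ k, gramSchmidtNormed 𝕜 f k ≠ 0 := fun k => by
    have hv : gramSchmidt 𝕜 f k ≠ 0 := by
      have := h.seven_eighths_le_norm_gramSchmidt (k := k) fun _ hl =>
        h.norm_inner_gramSchmidtNormed_le hl
      exact norm_pos_iff.mp (by linarith)
    exact smul_ne_zero (inv_ne_zero (RCLike.ofReal_ne_zero.mpr (norm_ne_zero_iff.mpr hv))) hv
  exact (gramSchmidtNormed_orthonormal' f).comp (fun k => ⟨k, hne k⟩)
    fun a b hab => congrArg Subtype.val hab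

variable {F : Type*} [SeminormedAddCommGroup F] [NormedSpace 𝕜 F]

theorem norm_map_gramSchmidt_sub_le (h : IsAlmostOrthonormal 𝕜 ε f) (φ : E →ₗ[𝕜] F) {k : ι}
    (hprev : ∀ l < k, ‖φ (gramSchmidtNormed 𝕜 f l) - φ (f l)‖ ≤
      ∑ m ∈ Iic l, 4 * ε m l * ‖φ (f m)‖) :
    ‖φ (gramSchmidt 𝕜 f k) - φ (f k)‖ ≤ 5 / 2 * ∑ m ∈ Iio k, ε m k * ‖φ (f m)‖ := by
  have hexp : φ (gramSchmidt 𝕜 f k) - φ (f k) =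
      -∑ l ∈ Iio k, ⟪gramSchmidtNormed 𝕜 f l, f k⟫ • φ (gramSchmidtNormed 𝕜 f l) := by
    rw [gramSchmidt_eq_sub_sum_inner_smul, map_sub, map_sum]
    simp only [map_smul]
    abel
  have hφe : ∀ l ∈ Iio k, ‖φ (gramSchmidtNormed 𝕜 f l)‖ ≤
      ‖φ (f l)‖ + ∑ m ∈ Iic l, 4 * ε m l * ‖φ (f m)‖ := fun l hl =>
    (norm_le_norm_add_norm_sub' _ (φ (f l))).trans (add_le_add le_rfl (hprev l (mem_Iio.mp hl)))
  have hswap : ∑ l ∈ Iio k, ∑ m ∈ Iic l, 8 * (ε m l * ε l k) * ‖φ (f m)‖ ≤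
      ∑ m ∈ Iio k, 1 / 2 * ε m k * ‖φ (f m)‖ := by
    rw [sum_comm' (t' := Iio k) (s' := fun m => {l ∈ Iio k | m ≤ l}) fun l m => by
      simp only [mem_Iio, mem_Iic, mem_filter]
      exact ⟨fun ⟨hlk, hml⟩ => ⟨⟨hlk, hml⟩, hml.trans_lt hlk⟩, fun ⟨hlm, _⟩ => hlm⟩]
    gcongr with m
    rw [← sum_mul, ← mul_sum]
    exact mul_le_mul_of_nonneg_right (by linarith [h.sum_subset_mul_le {l ∈ Iio k | m ≤ l} m k])
      (norm_nonneg _)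
  calc ‖φ (gramSchmidt 𝕜 f k) - φ (f k)‖
      ≤ ∑ l ∈ Iio k, 2 * ε l k * (‖φ (f l)‖ + ∑ m ∈ Iic l, 4 * ε m l * ‖φ (f m)‖) := by
        rw [hexp, norm_neg]
        refine (norm_sum_le _ _).trans (sum_le_sum fun l hl => ?_)
        rw [norm_smul]
        exact mul_le_mul (h.norm_inner_gramSchmidtNormed_le (mem_Iio.mp hl)) (hφe l hl)
          (norm_nonneg _) (by linarith [h.nonneg l k])
    _ = ∑ l ∈ Iio k, 2 * ε l k * ‖φ (f l)‖ +
          ∑ l ∈ Iio k, ∑ m ∈ Iic l, 8 * (ε m l * ε l k) * ‖φ (f m)‖ := by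
        rw [← sum_add_distrib]
        refine sum_congr rfl fun l _ => ?_
        rw [mul_add, mul_sum]
        congr 1
        exact sum_congr rfl fun m _ => by ring
    _ ≤ ∑ m ∈ Iio k, 2 * ε m k * ‖φ (f m)‖ + ∑ m ∈ Iio k, 1 / 2 * ε m k * ‖φ (f m)‖ := by
        gcongr
    _ = 5 / 2 * ∑ m ∈ Iio k, ε m k * ‖φ (f m)‖ := by
        rw [← sum_add_distrib, mul_sum]
        exact sum_congr rfl fun m _ => by ring

theorem norm_map_gramSchmidtNormed_sub_le (h : IsAlmostOrthonormal 𝕜 ε f) (φ : E →ₗ[𝕜] F)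
    (k : ι) : ‖φ (gramSchmidtNormed 𝕜 f k) - φ (f k)‖ ≤ ∑ m ∈ Iic k, 4 * ε m k * ‖φ (f m)‖ := by
  induction k using WellFoundedLT.induction with
  | _ k ih =>
  have hcoef : ∀ l < k, ‖⟪gramSchmidtNormed 𝕜 f l, f k⟫‖ ≤ 2 * ε l k :=
    fun _ hl => h.norm_inner_gramSchmidtNormed_le hl
  set r := ‖gramSchmidt 𝕜 f k‖
  have hdecomp : φ (gramSchmidtNormed 𝕜 f k) - φ (f k) =
      ((r⁻¹ : ℝ) : 𝕜) • (φ (gramSchmidt 𝕜 f k) - φ (f k)) + ((r⁻¹ - 1 : ℝ) : 𝕜) • φ (f k) := by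
    rw [gramSchmidtNormed, map_smul, RCLike.ofReal_sub, RCLike.ofReal_one, RCLike.ofReal_inv]
    module
  calc ‖φ (gramSchmidtNormed 𝕜 f k) - φ (f k)‖
      ≤ r⁻¹ * ‖φ (gramSchmidt 𝕜 f k) - φ (f k)‖ + |r⁻¹ - 1| * ‖φ (f k)‖ := by
        rw [hdecomp]
        refine (norm_add_le _ _).trans_eq ?_
        rw [norm_smul, norm_smul, RCLike.norm_ofReal, RCLike.norm_ofReal,
          abs_of_nonneg (inv_nonneg.mpr (norm_nonneg _))]
    _ ≤ 8 / 7 * (5 / 2 * ∑ m ∈ Iio k, ε m k * ‖φ (f m)‖) + 4 * ε k k * ‖φ (f k)‖ := by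
        gcongr
        · exact h.inv_norm_gramSchmidt_le hcoef
        · exact h.norm_map_gramSchmidt_sub_le φ ih
        · exact h.abs_inv_norm_gramSchmidt_sub_one_le hcoef
    _ ≤ ∑ m ∈ Iic k, 4 * ε m k * ‖φ (f m)‖ := by
        rw [Iic_eq_cons_Iio, sum_cons, add_comm, mul_sum, mul_sum]
        refine add_le_add le_rfl (sum_le_sum fun m _ => ?_)
        nlinarith [mul_nonneg (h.nonneg m k) (norm_nonneg (φ (f m)))]

end IsAlmostOrthonormal

end GramSchmidt

end Perturbation

theorem mem_unitaryGroup_of_orthonormal {𝕜 n : Type*} [RCLike 𝕜] [Fintype n] [DecidableEq n]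
    {v : n → EuclideanSpace 𝕜 n} (hv : Orthonormal 𝕜 v) :
    Matrix.of (fun i j => v j i) ∈ Matrix.unitaryGroup n 𝕜 := by
  rw [Matrix.mem_unitaryGroup_iff']
  ext a b
  rw [Matrix.mul_apply, Matrix.one_apply, ← orthonormal_iff_ite.mp hv a b,
    EuclideanSpace.inner_eq_star_dotProduct, dotProduct]
  simp [Matrix.star_apply, mul_comm]

theorem one_le_br (k : ℤ) : 1 ≤ br k := by
  simp only [br]
  linarith [abs_nonneg (k : ℝ)]

theorem br_pos (k : ℤ) : 0 < br k := zero_lt_one.trans_le (one_le_br k)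

theorem br_sub_comm (a b : ℤ) : br (a - b) = br (b - a) := by
  simp only [br, Int.cast_sub, abs_sub_comm]

theorem br_sub_le_mul (a m b : ℤ) : br (a - b) ≤ br (a - m) * br (m - b) := by
  simp only [br, Int.cast_sub]
  nlinarith [abs_sub_le (a : ℝ) m b, abs_nonneg ((a : ℝ) - m), abs_nonneg ((m : ℝ) - b)]

section eps

variable {c β α : ℝ} {N : ℕ}

theorem eps_comm (a b : ℤ) : eps c β α N a b = eps c β α N b a := by
  rw [eps, eps, br_sub_comm, mul_comm (br a), Int.cast_sub, Int.cast_sub, abs_sub_comm]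

theorem eps_nonneg (hc : 0 ≤ c) (a b : ℤ) : 0 ≤ eps c β α N a b := by
  have := br_pos a; have := br_pos b; have := br_pos (a - b)
  unfold eps
  positivity

theorem eps_mul_eps_le (hc : 0 ≤ c) (hβ : 0 ≤ β) (hα : 1 ≤ α) (a m b : ℤ) :
    eps c β α N a m * eps c β α N m b ≤ c / ((N : ℝ) + 1) ^ 2 * eps c β α N a b := by
  have := br_pos a; have := br_pos b; have := br_pos m
  have hexp : Real.exp (-β * |((a - m : ℤ) : ℝ)|) * Real.exp (-β * |((m - b : ℤ) : ℝ)|) ≤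
      Real.exp (-β * |((a - b : ℤ) : ℝ)|) := by
    rw [← Real.exp_add, Real.exp_le_exp]
    push_cast
    nlinarith [abs_sub_le (a : ℝ) m b]
  have hpow : br (a - b) ^ (α - 1) ≤ br (a - m) ^ (α - 1) * br (m - b) ^ (α - 1) := by
    rw [← Real.mul_rpow (br_pos _).le (br_pos _).le]
    exact Real.rpow_le_rpow (br_pos _).le (br_sub_le_mul a m b) (by linarith)
  have hm : 1 ≤ br m * br m := one_le_mul_of_one_le_of_one_le (one_le_br m) (one_le_br m)
  rw [eps, eps, eps, div_mul_div_comm, div_mul_div_comm]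
  apply div_le_div₀ (by positivity)
  · calc c * Real.exp (-β * |((a - m : ℤ) : ℝ)|) * (c * Real.exp (-β * |((m - b : ℤ) : ℝ)|))
        = c * c * (Real.exp (-β * |((a - m : ℤ) : ℝ)|) * Real.exp (-β * |((m - b : ℤ) : ℝ)|)) := by
          ring
      _ ≤ c * c * Real.exp (-β * |((a - b : ℤ) : ℝ)|) :=
          mul_le_mul_of_nonneg_left hexp (mul_nonneg hc hc)
      _ = c * (c * Real.exp (-β * |((a - b : ℤ) : ℝ)|)) := by ring
  · have := br_pos (a - b); positivity
  · calc ((N : ℝ) + 1) ^ 2 * (br a * br b * ((N : ℝ) + 1) ^ 2 * br (a - b) ^ (α - 1))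
        = br a * br b * ((N : ℝ) + 1) ^ 4 * (1 * br (a - b) ^ (α - 1)) := by ring
      _ ≤ br a * br b * ((N : ℝ) + 1) ^ 4 *
            ((br m * br m) * (br (a - m) ^ (α - 1) * br (m - b) ^ (α - 1))) := by
          have := br_pos (a - b)
          gcongr
      _ = br a * br m * ((N : ℝ) + 1) ^ 2 * br (a - m) ^ (α - 1) *
            (br m * br b * ((N : ℝ) + 1) ^ 2 * br (m - b) ^ (α - 1)) := by ring

theorem sum_eps_mul_eps_le (hc : 0 ≤ c) (hβ : 0 ≤ β) (hα : 1 ≤ α) (hN : 32 * c ≤ N + 1)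
    (a b : ℤ) :
    ∑ m : Finset.Icc (-(N : ℤ)) N, eps c β α N a m * eps c β α N m b ≤ eps c β α N a b / 16 := by
  have hN1 : (0 : ℝ) < N + 1 := by positivity
  have hcard : (Fintype.card (Finset.Icc (-(N : ℤ)) N) : ℝ) ≤ 2 * (N + 1) := by
    have : (Finset.Icc (-(N : ℤ)) N).card = 2 * N + 1 := by rw [Int.card_Icc]; omega
    rw [Fintype.card_coe, this]
    push_cast
    linarith
  calc ∑ m : Finset.Icc (-(N : ℤ)) N, eps c β α N a m * eps c β α N m b
      ≤ ∑ _m : Finset.Icc (-(N : ℤ)) N, c / ((N : ℝ) + 1) ^ 2 * eps c β α N a b :=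
        sum_le_sum fun m _ => eps_mul_eps_le hc hβ hα a m b
    _ = Fintype.card (Finset.Icc (-(N : ℤ)) N) * (c / ((N : ℝ) + 1) ^ 2) * eps c β α N a b := by
        rw [sum_const, card_univ, nsmul_eq_mul, mul_assoc]
    _ ≤ 2 * (N + 1) * (c / ((N : ℝ) + 1) ^ 2) * eps c β α N a b := by
        gcongr
        exact eps_nonneg hc a b
    _ ≤ 1 / 16 * eps c β α N a b := by
        gcongr
        · exact eps_nonneg hc a b
        · rw [show 2 * ((N : ℝ) + 1) * (c / ((N : ℝ) + 1) ^ 2) = 2 * c / (N + 1) by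
            field_simp, div_le_iff₀ hN1]
          linarith
    _ = eps c β α N a b / 16 := by ring

theorem eps_self_le_sum (hc : 0 ≤ c) (k : Finset.Icc (-(N : ℤ)) N) :
    eps c β α N k k ≤
      ∑ l : Finset.Icc (-(N : ℤ)) N, if |l.val| ≤ |k.val| then eps c β α N l k else 0 :=
  (if_pos le_rfl).symm.trans_le <| single_le_sum (f := fun l : Finset.Icc (-(N : ℤ)) N =>
    if |l.val| ≤ |k.val| then eps c β α N l k else 0)
    (fun _ _ => by split_ifs; exacts [eps_nonneg hc _ _, le_rfl]) (mem_univ k)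

end eps

/-- The indices `-N, …, N` ordered lexicographically by `(|k|, k)`, i.e. `0, -1, 1, -2, 2, …`. -/
def CentredIndex (N : ℕ) : Type := Finset.Icc (-(N : ℤ)) N

namespace CentredIndex

variable {N : ℕ}

def toCentred : Finset.Icc (-(N : ℤ)) N ≃ CentredIndex N := Equiv.refl _

noncomputable instance : Fintype (CentredIndex N) :=
  inferInstanceAs (Fintype (Finset.Icc (-(N : ℤ)) N))

instance : LinearOrder (CentredIndex N) :=
  LinearOrder.lift' (fun k => toLex (|(toCentred.symm k : ℤ)|, (toCentred.symm k : ℤ)))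
    fun _ _ h => toCentred.symm.injective (Subtype.ext (congrArg Prod.snd (toLex.injective h)))

noncomputable instance : LocallyFiniteOrderBot (CentredIndex N) :=
  LocallyFiniteOrderBot.ofIic _ (fun k => {l | l ≤ k}) fun _ _ => by simp

theorem toCentred_lt_toCentred {l k : Finset.Icc (-(N : ℤ)) N} :
    toCentred l < toCentred k ↔ -|k.val| ≤ l.val ∧ l.val < |k.val| ∧ l.val ≠ k.val := by
  change toLex (|l.val|, l.val) < toLex (|k.val|, k.val) ↔ _
  rw [Prod.Lex.toLex_lt_toLex]
  rcases abs_cases l.val with ⟨hl, _⟩ | ⟨hl, _⟩ <;>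
    rcases abs_cases k.val with ⟨hk, _⟩ | ⟨hk, _⟩ <;> simp only [hl, hk] <;> omega

theorem sum_Iio_toCentred (g : Finset.Icc (-(N : ℤ)) N → ℝ) (k : Finset.Icc (-(N : ℤ)) N) :
    ∑ l ∈ Iio (toCentred k), g (toCentred.symm l) =
      ∑ l, if -|k.val| ≤ l.val ∧ l.val < |k.val| ∧ l.val ≠ k.val then g l else 0 := by
  rw [← sum_filter]
  refine sum_equiv toCentred.symm (fun l => ?_) fun _ _ => rfl
  rw [mem_Iio, mem_filter, ← toCentred_lt_toCentred, Equiv.apply_symm_apply]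
  simp

noncomputable def columns (w : Matrix (Finset.Icc (-(N : ℤ)) N) (Finset.Icc (-(N : ℤ)) N) ℂ)
    (k : CentredIndex N) : EuclideanSpace ℂ (Finset.Icc (-(N : ℤ)) N) :=
  WithLp.toLp 2 fun j => w j (toCentred.symm k)

@[simp]
theorem columns_apply (w : Matrix (Finset.Icc (-(N : ℤ)) N) (Finset.Icc (-(N : ℤ)) N) ℂ)
    (k : CentredIndex N) (j : Finset.Icc (-(N : ℤ)) N) : columns w k j = w j (toCentred.symm k) :=
  rfl

theorem inner_columns (w : Matrix (Finset.Icc (-(N : ℤ)) N) (Finset.Icc (-(N : ℤ)) N) ℂ)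
    (a b : CentredIndex N) :
    inner ℂ (columns w a) (columns w b) =
      ∑ j, conj (w j (toCentred.symm a)) * w j (toCentred.symm b) := by
  simp only [columns, EuclideanSpace.inner_toLp_toLp, dotProduct, Pi.star_apply, RCLike.star_def,
    mul_comm]

end CentredIndex

open CentredIndex

theorem isAlmostOrthonormal_columns {c β α : ℝ} {N : ℕ} (hc : 0 ≤ c) (hβ : 0 ≤ β) (hα : 1 ≤ α)
    (hN : 32 * c ≤ N + 1)
    (w : Matrix (Finset.Icc (-(N : ℤ)) N) (Finset.Icc (-(N : ℤ)) N) ℂ)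
    (hw : ∀ j' j'' : Finset.Icc (-(N : ℤ)) N,
      ‖(∑ j, conj (w j j') * w j j'') - (if j' = j'' then 1 else 0)‖ ≤ eps c β α N j' j'') :
    IsAlmostOrthonormal ℂ
      (fun a b : CentredIndex N => eps c β α N (toCentred.symm a) (toCentred.symm b))
      (columns w) := by
  refine ⟨fun _ _ => eps_comm _ _, fun a b => ?_, fun a => ?_, fun a b hab => ?_⟩
  · exact (toCentred.symm.sum_comp fun m => eps c β α N (toCentred.symm a) m *
      eps c β α N m (toCentred.symm b)).trans_le (sum_eps_mul_eps_le hc hβ hα hN _ _)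
  · have h := hw (toCentred.symm a) (toCentred.symm a)
    rwa [if_pos rfl, ← inner_columns] at h
  · have h := hw (toCentred.symm a) (toCentred.symm b)
    rwa [if_neg (toCentred.symm.injective.ne hab), sub_zero, ← inner_columns] at h

theorem almost_unitary_correction (α β c : ℝ) (hα : 2 < α) (hβ : 0 ≤ β) (hc : 0 < c) :
    ∃ N₀ : ℕ, ∀ N : ℕ, N₀ ≤ N →
      ∀ w : Matrix (Finset.Icc (-(N : ℤ)) (N : ℤ)) (Finset.Icc (-(N : ℤ)) (N : ℤ)) ℂ,
        (∀ j' j'' : Finset.Icc (-(N : ℤ)) (N : ℤ),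
          ‖(∑ j : Finset.Icc (-(N : ℤ)) (N : ℤ), conj (w j j') * w j j'') -
              (if j' = j'' then 1 else 0)‖ ≤ eps c β α N j'.val j''.val) →
        ∃ u : Matrix (Finset.Icc (-(N : ℤ)) (N : ℤ)) (Finset.Icc (-(N : ℤ)) (N : ℤ)) ℂ,
          u ∈ Matrix.unitaryGroup (Finset.Icc (-(N : ℤ)) (N : ℤ)) ℂ ∧
          ∀ j k : Finset.Icc (-(N : ℤ)) (N : ℤ),
            ‖u j k - w j k‖ ≤
              (4 * ∑ l : Finset.Icc (-(N : ℤ)) (N : ℤ),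
                  if |l.val| ≤ |k.val| then eps c β α N l.val k.val else 0) * ‖w j k‖ +
              ∑ l : Finset.Icc (-(N : ℤ)) (N : ℤ),
                if -|k.val| ≤ l.val ∧ l.val < |k.val| ∧ l.val ≠ k.val then
                  4 * eps c β α N l.val k.val * ‖w j l‖ else 0 := by
  refine ⟨⌈32 * c⌉₊, fun N hN w hw => ?_⟩
  have hf := isAlmostOrthonormal_columns hc.le hβ (by linarith)
    (by linarith [Nat.ceil_le.mp hN]) w hw
  refine ⟨Matrix.of fun j k => gramSchmidtNormed ℂ (columns w) (toCentred k) j,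
    mem_unitaryGroup_of_orthonormal (hf.orthonormal_gramSchmidtNormed.comp _ toCentred.injective),
    fun j k => ?_⟩
  have hk := hf.norm_map_gramSchmidtNormed_sub_le (EuclideanSpace.projₗ j) (toCentred k)
  rw [Iic_eq_cons_Iio, sum_cons] at hk
  calc _ ≤ 4 * eps c β α N k k * ‖w j k‖ + ∑ l ∈ Iio (toCentred k),
        4 * eps c β α N (toCentred.symm l) k * ‖w j (toCentred.symm l)‖ := by simpa using hk
    _ ≤ _ := by
        rw [sum_Iio_toCentred (fun l => 4 * eps c β α N l k * ‖w j l‖)]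
        gcongr
        exact eps_self_le_sum hc.le k
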